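/- arXiv:1901.07790 — 6 statements merged into one kernel-verified Lean document; each statement's English description precedes it below -/
import Mathlib

section
/- For every ε > 0 there exists K > 0 such that for all k ∈ ℂ with |k| ≥ K and all x ∈ [0,ℓ] one has |∫₀ˣ sin(k(x−2t)) q(t) dt − (1/(2k))·(q(x) − q(0))·cos(kx)| ≤ ε · e^{|Im k| x} / |k|. -/
/-!
Write `q = q 0 + ∫₀ᵗ q'` and exchange the order of integration: the constant `q 0` integrates to
zero against `sin (k (x - 2t))`, and the left-hand side becomes
`-(1 / (2k)) ∫₀ˣ q'(t) cos (k (x - 2t)) dt`. Since `|Im (k (x - 2t))| ≤ |Im k| x` for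
`t ∈ [0, x]`, this integral is `o(e^{|Im k| x})` uniformly in `x` by a Riemann–Lebesgue argument:
`q'` is `L¹`-close to a polynomial, and against a polynomial integration by parts gains `1 / |k|`.
-/

open MeasureTheory intervalIntegral Set Polynomial Complex

namespace Complex

lemma norm_exp_mul_I_le_exp_abs_im (z : ℂ) : ‖exp (z * I)‖ ≤ Real.exp |z.im| := by
  rw [norm_exp, mul_I_re]
  exact Real.exp_le_exp.2 (neg_le_abs _)

lemma norm_exp_neg_mul_I_le_exp_abs_im (z : ℂ) : ‖exp (-z * I)‖ ≤ Real.exp |z.im| := by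
  simpa using norm_exp_mul_I_le_exp_abs_im (-z)

lemma norm_cos_le_exp_abs_im (z : ℂ) : ‖cos z‖ ≤ Real.exp |z.im| := by
  rw [cos, norm_div, norm_ofNat]
  linarith [norm_add_le (exp (z * I)) (exp (-z * I)),
    norm_exp_mul_I_le_exp_abs_im z, norm_exp_neg_mul_I_le_exp_abs_im z]

lemma norm_sin_le_exp_abs_im (z : ℂ) : ‖sin z‖ ≤ Real.exp |z.im| := by
  rw [sin, norm_div, norm_mul, norm_I, mul_one, norm_ofNat]
  linarith [norm_sub_le (exp (-z * I)) (exp (z * I)),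
    norm_exp_mul_I_le_exp_abs_im z, norm_exp_neg_mul_I_le_exp_abs_im z]

end Complex

lemma IntervalIntegrable.ofReal {f : ℝ → ℝ} {μ : Measure ℝ} {a b : ℝ}
    (hf : IntervalIntegrable f μ a b) : IntervalIntegrable (fun t => (f t : ℂ)) μ a b :=
  ⟨hf.1.ofReal, hf.2.ofReal⟩

theorem intervalIntegral.integral_primitive_mul_eq_integral_mul_integral {𝕜 : Type*}
    [RCLike 𝕜] {f g : ℝ → 𝕜} {a b : ℝ} (hab : a ≤ b)
    (hf : IntervalIntegrable f volume a b) (hg : IntervalIntegrable g volume a b) :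
    ∫ t in a..b, (∫ s in a..t, f s) * g t = ∫ s in a..b, f s * ∫ t in s..b, g t := by
  set μ := volume.restrict (Ioc a b)
  set H : ℝ × ℝ → 𝕜 := {p | p.1 ≤ p.2}.indicator fun p => f p.1 * g p.2
  have hH : Integrable H (μ.prod μ) :=
    (hf.1.mul_prod hg.1).indicator (measurableSet_le measurable_fst measurable_snd)
  have hinner_s : ∀ t ∈ Ioc a b, ∫ s, H (s, t) ∂μ = (∫ s in a..t, f s) * g t := by
    intro t ht
    have hsec : (fun s => H (s, t)) = (Iic t).indicator fun s => f s * g t := by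
      ext s; simp [H, indicator_apply]
    rw [hsec, MeasureTheory.integral_indicator measurableSet_Iic,
      Measure.restrict_restrict measurableSet_Iic, Iic_inter_Ioc_of_le ht.2,
      MeasureTheory.integral_mul_const, integral_of_le ht.1.le]
  have hinner_t : ∀ s ∈ Ioc a b, ∫ t, H (s, t) ∂μ = f s * ∫ t in s..b, g t := by
    intro s hs
    have hsec : (fun t => H (s, t)) = (Ici s).indicator fun t => f s * g t := by
      ext t; simp [H, indicator_apply]
    have hIcc : Ici s ∩ Ioc a b = Icc s b := by
      ext r
      simp only [mem_inter_iff, mem_Ici, mem_Ioc, mem_Icc]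
      grind [hs.1]
    rw [hsec, MeasureTheory.integral_indicator measurableSet_Ici,
      Measure.restrict_restrict measurableSet_Ici, hIcc, integral_Icc_eq_integral_Ioc,
      MeasureTheory.integral_const_mul, integral_of_le hs.2]
  rw [integral_of_le hab, integral_of_le hab,
    ← setIntegral_congr_fun measurableSet_Ioc hinner_s,
    ← setIntegral_congr_fun measurableSet_Ioc hinner_t]
  exact (integral_integral_swap (f := fun s t => H (s, t)) hH).symm

lemma IntervalIntegrable.exists_polynomial_integral_abs_sub_le {f : ℝ → ℝ} {a b : ℝ}
    (hab : a ≤ b) (hf : IntervalIntegrable f volume a b) {ε : ℝ} (hε : 0 < ε) :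
    ∃ p : ℝ[X], ∫ t in a..b, |f t - p.eval t| ≤ ε := by
  have hf₀ : Integrable ((Ioc a b).indicator f) := hf.1.integrable_indicator measurableSet_Ioc
  obtain ⟨g, -, hfg, hg, hg_int⟩ :=
    hf₀.exists_hasCompactSupport_integral_sub_le (half_pos hε)
  have hba : 0 < b - a + 1 := by linarith
  set δ := ε / (2 * (b - a + 1))
  obtain ⟨p, hp⟩ := exists_polynomial_near_of_continuousOn a b g hg.continuousOn δ
    (by positivity)
  refine ⟨p, ?_⟩
  have hgI := hg.intervalIntegrable (μ := volume) a b
  have hpI := p.continuous.intervalIntegrable (μ := volume) a b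
  have hfg' : ∫ t in a..b, |f t - g t| ≤ ε / 2 := by
    refine le_trans ?_ hfg
    rw [integral_of_le hab]
    calc ∫ t in Ioc a b, |f t - g t| = ∫ t in Ioc a b, ‖(Ioc a b).indicator f t - g t‖ :=
          setIntegral_congr_fun measurableSet_Ioc fun t ht => by
            rw [indicator_of_mem ht, Real.norm_eq_abs]
      _ ≤ ∫ t, ‖(Ioc a b).indicator f t - g t‖ :=
          setIntegral_le_integral (hf₀.sub hg_int).norm
            (Filter.Eventually.of_forall fun _ => norm_nonneg _)
  have hgp : ∫ t in a..b, |g t - p.eval t| ≤ ε / 2 := by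
    calc ∫ t in a..b, |g t - p.eval t|
        ≤ δ * |b - a| := (Real.le_norm_self _).trans <| norm_integral_le_of_norm_le_const
          fun t ht => by
            rw [Real.norm_eq_abs, abs_abs, abs_sub_comm]
            exact (hp t (Ioc_subset_Icc_self (uIoc_of_le hab ▸ ht))).le
      _ ≤ δ * (b - a + 1) := by
          gcongr
          rw [abs_of_nonneg (sub_nonneg.2 hab)]
          linarith
      _ = ε / 2 := by
          simp only [δ]
          field_simp
  calc ∫ t in a..b, |f t - p.eval t|
      ≤ ∫ t in a..b, (|f t - g t| + |g t - p.eval t|) :=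
        integral_mono_on hab (hf.sub hpI).abs ((hf.sub hgI).abs.add (hgI.sub hpI).abs)
          fun t _ => abs_sub_le _ _ _
    _ ≤ ε := by
        rw [integral_add (hf.sub hgI).abs (hgI.sub hpI).abs]
        linarith

section

variable {k : ℂ} {x t : ℝ}

lemma abs_im_mul_sub_two_mul_le (ht : t ∈ Icc 0 x) :
    |(k * ((x : ℂ) - 2 * t)).im| ≤ |k.im| * x := by
  have him : (k * ((x : ℂ) - 2 * t)).im = k.im * (x - 2 * t) := by simp [Complex.mul_im]
  rw [him, abs_mul]
  gcongr
  exact abs_le.2 ⟨by linarith [ht.2], by linarith [ht.1]⟩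

lemma norm_cos_mul_sub_two_mul_le (ht : t ∈ Icc 0 x) :
    ‖cos (k * ((x : ℂ) - 2 * t))‖ ≤ Real.exp (|k.im| * x) :=
  (Complex.norm_cos_le_exp_abs_im _).trans (Real.exp_le_exp.2 (abs_im_mul_sub_two_mul_le ht))

lemma norm_sin_mul_sub_two_mul_le (ht : t ∈ Icc 0 x) :
    ‖sin (k * ((x : ℂ) - 2 * t))‖ ≤ Real.exp (|k.im| * x) :=
  (Complex.norm_sin_le_exp_abs_im _).trans (Real.exp_le_exp.2 (abs_im_mul_sub_two_mul_le ht))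

lemma hasDerivAt_mul_sub_two_mul (k : ℂ) (x t : ℝ) :
    HasDerivAt (fun s : ℝ => k * ((x : ℂ) - 2 * s)) (-2 * k) t := by
  simpa [mul_comm] using
    ((((hasDerivAt_id t).ofReal_comp).const_mul (2 : ℂ)).const_sub (x : ℂ)).const_mul k

lemma continuous_sin_mul_sub_two_mul (k : ℂ) (x : ℝ) :
    Continuous fun t : ℝ => sin (k * ((x : ℂ) - 2 * t)) := by
  fun_prop

lemma continuous_cos_mul_sub_two_mul (k : ℂ) (x : ℝ) :
    Continuous fun t : ℝ => cos (k * ((x : ℂ) - 2 * t)) := by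
  fun_prop

lemma integral_sin_mul_sub_two_mul (hk : k ≠ 0) (x a b : ℝ) :
    ∫ t in a..b, sin (k * ((x : ℂ) - 2 * t)) =
      (cos (k * ((x : ℂ) - 2 * b)) - cos (k * ((x : ℂ) - 2 * a))) / (2 * k) := by
  have hderiv : ∀ t ∈ uIcc a b, HasDerivAt
      (fun s : ℝ => cos (k * ((x : ℂ) - 2 * s)) / (2 * k))
      (sin (k * ((x : ℂ) - 2 * t))) t := fun t _ => by
    refine (((Complex.hasDerivAt_cos _).comp t (hasDerivAt_mul_sub_two_mul k x t)).div_const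
      (2 * k)).congr_deriv ?_
    field_simp
  rw [integral_eq_sub_of_hasDerivAt hderiv
    ((continuous_sin_mul_sub_two_mul k x).intervalIntegrable _ _), sub_div]

lemma integral_sin_mul_sub_two_mul_self (x : ℝ) :
    ∫ t in (0 : ℝ)..x, sin (k * ((x : ℂ) - 2 * t)) = 0 := by
  rcases eq_or_ne k 0 with rfl | hk
  · simp
  rw [integral_sin_mul_sub_two_mul hk]
  simp [show k * ((x : ℂ) - 2 * x) = -(k * x) by ring]

lemma integral_primitive_mul_sin_mul_sub_two_mul {f : ℝ → ℂ} (hk : k ≠ 0) (hx : 0 ≤ x)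
    (hf : IntervalIntegrable f volume 0 x) :
    ∫ t in (0 : ℝ)..x, (∫ s in (0 : ℝ)..t, f s) * sin (k * ((x : ℂ) - 2 * t)) =
      ((∫ s in (0 : ℝ)..x, f s) * cos (k * x) -
        ∫ s in (0 : ℝ)..x, f s * cos (k * ((x : ℂ) - 2 * s))) / (2 * k) := by
  have hinner : ∀ s : ℝ, ∫ t in s..x, sin (k * ((x : ℂ) - 2 * t)) =
      (cos (k * x) - cos (k * ((x : ℂ) - 2 * s))) / (2 * k) := fun s => by
    rw [integral_sin_mul_sub_two_mul hk, show k * ((x : ℂ) - 2 * x) = -(k * x) by ring,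
      Complex.cos_neg]
  rw [integral_primitive_mul_eq_integral_mul_integral hx hf
      ((continuous_sin_mul_sub_two_mul k x).intervalIntegrable _ _)]
  have hintegrand : ∀ s, f s * ((cos (k * x) - cos (k * ((x : ℂ) - 2 * s))) /
      (2 * k)) = (f s * cos (k * x) - f s * cos (k * ((x : ℂ) - 2 * s))) / (2 * k) :=
    fun s => by ring
  simp_rw [hinner, hintegrand]
  rw [intervalIntegral.integral_div, intervalIntegral.integral_sub
      (hf.mul_const _) (hf.mul_continuousOn (continuous_cos_mul_sub_two_mul k x).continuousOn),
    intervalIntegral.integral_mul_const]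

theorem integral_sin_mul_sub_two_mul_mul_sub_eq_integral_mul_cos {q q' : ℝ → ℝ} (hk : k ≠ 0) (hx : 0 ≤ x)
    (hq' : IntervalIntegrable q' volume 0 x)
    (hq : ∀ t ∈ Icc 0 x, q t = q 0 + ∫ s in (0 : ℝ)..t, q' s) :
    (∫ t in (0 : ℝ)..x, sin (k * ((x : ℂ) - 2 * t)) * (q t : ℂ))
        - (1 / (2 * k)) * ((q x : ℂ) - (q 0 : ℂ)) * cos (k * x) =
      -(1 / (2 * k)) * ∫ t in (0 : ℝ)..x, (q' t : ℂ) * cos (k * ((x : ℂ) - 2 * t)) := by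
  have hq'C := hq'.ofReal
  set F : ℝ → ℂ := fun t => ∫ s in (0 : ℝ)..t, (q' s : ℂ)
  have hqF : ∀ t ∈ uIcc 0 x, (q t : ℂ) = q 0 + F t := fun t ht => by
    rw [uIcc_of_le hx] at ht
    simp [F, hq t ht, intervalIntegral.integral_ofReal]
  have hF : ContinuousOn F (uIcc 0 x) := continuousOn_primitive_interval' hq'C left_mem_uIcc
  have hsplit : ∫ t in (0 : ℝ)..x, sin (k * ((x : ℂ) - 2 * t)) * (q t : ℂ) =
      (q 0 : ℂ) * (∫ t in (0 : ℝ)..x, sin (k * ((x : ℂ) - 2 * t))) +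
        ∫ t in (0 : ℝ)..x, F t * sin (k * ((x : ℂ) - 2 * t)) := by
    have hFsin : IntervalIntegrable (fun t => F t * sin (k * ((x : ℂ) - 2 * t))) volume 0 x :=
      (hF.mul (continuous_sin_mul_sub_two_mul k x).continuousOn).intervalIntegrable
    rw [← intervalIntegral.integral_const_mul, ← intervalIntegral.integral_add
      (((continuous_sin_mul_sub_two_mul k x).intervalIntegrable _ _).const_mul _) hFsin]
    exact integral_congr fun t ht => by simp only [hqF t ht]; ring
  rw [hsplit, integral_sin_mul_sub_two_mul_self, integral_primitive_mul_sin_mul_sub_two_mul hk hx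
    hq'C, hqF x right_mem_uIcc]
  field_simp
  ring

lemma norm_integral_mul_cos_mul_sub_two_mul_le {g : ℝ → ℂ} (hx : 0 ≤ x)
    (hg : IntervalIntegrable g volume 0 x) :
    ‖∫ t in (0 : ℝ)..x, g t * cos (k * ((x : ℂ) - 2 * t))‖ ≤
      (∫ t in (0 : ℝ)..x, ‖g t‖) * Real.exp (|k.im| * x) := by
  rw [← intervalIntegral.integral_mul_const]
  refine norm_integral_le_of_norm_le hx (Filter.Eventually.of_forall fun t ht => ?_)
    (hg.norm.mul_const _)
  rw [norm_mul]
  exact mul_le_mul_of_nonneg_left (norm_cos_mul_sub_two_mul_le (Ioc_subset_Icc_self ht))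
    (norm_nonneg _)

lemma norm_integral_mul_cos_mul_sub_two_mul_le_of_hasDerivAt {u u' : ℝ → ℂ} {M M' : ℝ}
    (hk : k ≠ 0) (hx : 0 ≤ x) (hu : ∀ t ∈ Icc 0 x, HasDerivAt u (u' t) t)
    (hu' : IntervalIntegrable u' volume 0 x)
    (hM : ∀ t ∈ Icc 0 x, ‖u t‖ ≤ M) (hM' : ∀ t ∈ Icc 0 x, ‖u' t‖ ≤ M') :
    ‖∫ t in (0 : ℝ)..x, u t * cos (k * ((x : ℂ) - 2 * t))‖ ≤
      (2 * M + x * M') * Real.exp (|k.im| * x) / (2 * ‖k‖) := by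
  set B := Real.exp (|k.im| * x) / (2 * ‖k‖)
  set v : ℝ → ℂ := fun t => sin (k * ((x : ℂ) - 2 * t)) / -(2 * k)
  have hv : ∀ t ∈ uIcc 0 x, HasDerivAt v (cos (k * ((x : ℂ) - 2 * t))) t :=
    fun t _ => by
      refine (((Complex.hasDerivAt_sin _).comp t
        (hasDerivAt_mul_sub_two_mul k x t)).div_const _).congr_deriv ?_
      field_simp
  have hvB : ∀ t ∈ Icc 0 x, ‖v t‖ ≤ B := fun t ht => by
    simp only [v, B, norm_div, norm_neg, norm_mul, Complex.norm_ofNat]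
    gcongr
    exact norm_sin_mul_sub_two_mul_le ht
  have hprod : ∀ {w : ℝ → ℂ} {N : ℝ}, (∀ t ∈ Icc 0 x, ‖w t‖ ≤ N) →
      ∀ t ∈ Icc 0 x, ‖w t * v t‖ ≤ N * B := fun hN t ht => by
    rw [norm_mul]
    exact mul_le_mul (hN t ht) (hvB t ht) (norm_nonneg _) ((norm_nonneg _).trans (hN t ht))
  rw [integral_mul_deriv_eq_deriv_mul (fun t ht => hu t (uIcc_of_le hx ▸ ht)) hv hu'
    ((continuous_cos_mul_sub_two_mul k x).intervalIntegrable _ _)]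
  have hint : ‖∫ t in (0 : ℝ)..x, u' t * v t‖ ≤ M' * B * |x - 0| :=
    norm_integral_le_of_norm_le_const fun t ht =>
      hprod hM' t (Ioc_subset_Icc_self (uIoc_of_le hx ▸ ht))
  calc ‖u x * v x - u 0 * v 0 - ∫ t in (0 : ℝ)..x, u' t * v t‖
      ≤ ‖u x * v x‖ + ‖u 0 * v 0‖ + ‖∫ t in (0 : ℝ)..x, u' t * v t‖ :=
        (norm_sub_le _ _).trans (add_le_add_left (norm_sub_le _ _) _)
    _ ≤ M * B + M * B + M' * B * |x - 0| :=
        add_le_add (add_le_add (hprod hM x ⟨hx, le_rfl⟩) (hprod hM 0 ⟨le_rfl, hx⟩)) hint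
    _ = (2 * M + x * M') * Real.exp (|k.im| * x) / (2 * ‖k‖) := by
        rw [sub_zero, abs_of_nonneg hx]
        ring

lemma Polynomial.exists_norm_integral_eval_mul_cos_mul_sub_two_mul_le (p : ℝ[X]) (ℓ : ℝ) :
    ∃ C, ∀ k : ℂ, k ≠ 0 → ∀ x ∈ Icc 0 ℓ,
      ‖∫ t in (0 : ℝ)..x, ((p.eval t : ℝ) : ℂ) * cos (k * ((x : ℂ) - 2 * t))‖ ≤
        C * Real.exp (|k.im| * x) / ‖k‖ := by
  obtain ⟨M, hM⟩ := (isCompact_Icc (a := (0 : ℝ)) (b := ℓ)).exists_bound_of_continuousOn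
    (Complex.continuous_ofReal.comp p.continuous).continuousOn
  obtain ⟨M', hM'⟩ := (isCompact_Icc (a := (0 : ℝ)) (b := ℓ)).exists_bound_of_continuousOn
    (Complex.continuous_ofReal.comp p.derivative.continuous).continuousOn
  refine ⟨(2 * M + ℓ * M') / 2, fun k hk x hx => ?_⟩
  have hM'_nonneg : 0 ≤ M' := (norm_nonneg _).trans (hM' x hx)
  have hIcc : Icc 0 x ⊆ Icc 0 ℓ := Icc_subset_Icc_right hx.2
  calc _ ≤ (2 * M + x * M') * Real.exp (|k.im| * x) / (2 * ‖k‖) :=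
        norm_integral_mul_cos_mul_sub_two_mul_le_of_hasDerivAt hk hx.1
          (fun t _ => (p.hasDerivAt t).ofReal_comp)
          ((Complex.continuous_ofReal.comp p.derivative.continuous).intervalIntegrable _ _)
          (fun t ht => hM t (hIcc ht)) (fun t ht => hM' t (hIcc ht))
    _ ≤ (2 * M + ℓ * M') * Real.exp (|k.im| * x) / (2 * ‖k‖) := by gcongr; exact hx.2
    _ = (2 * M + ℓ * M') / 2 * Real.exp (|k.im| * x) / ‖k‖ := by ring

end

theorem exists_norm_integral_mul_cos_mul_sub_two_mul_le {f : ℝ → ℝ} {ℓ : ℝ}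
    (hℓ : 0 ≤ ℓ) (hf : IntervalIntegrable f volume 0 ℓ) {ε : ℝ} (hε : 0 < ε) :
    ∃ K > 0, ∀ k : ℂ, K ≤ ‖k‖ → ∀ x ∈ Icc 0 ℓ,
      ‖∫ t in (0 : ℝ)..x, (f t : ℂ) * cos (k * ((x : ℂ) - 2 * t))‖ ≤
        ε * Real.exp (|k.im| * x) := by
  obtain ⟨p, hp⟩ := hf.exists_polynomial_integral_abs_sub_le hℓ (half_pos hε)
  obtain ⟨C, hC⟩ := p.exists_norm_integral_eval_mul_cos_mul_sub_two_mul_le ℓ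
  refine ⟨max (2 * C / ε) 1, lt_max_of_lt_right one_pos, fun k hK x hx => ?_⟩
  have hk : 0 < ‖k‖ := one_pos.trans_le ((le_max_right _ _).trans hK)
  have hCk : C / ‖k‖ ≤ ε / 2 := by
    have := (le_max_left _ _).trans hK
    rw [div_le_iff₀ hε] at this
    rw [div_le_iff₀ hk]
    linarith
  have hfx : IntervalIntegrable f volume 0 x :=
    hf.mono_set (uIcc_subset_uIcc_left (Icc_subset_uIcc hx))
  have hpx := p.continuous.intervalIntegrable (μ := volume) 0 x
  have hcos := (continuous_cos_mul_sub_two_mul k x).continuousOn (s := uIcc 0 x)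
  have hsplit : ∫ t in (0 : ℝ)..x, (f t : ℂ) * cos (k * ((x : ℂ) - 2 * t)) =
      (∫ t in (0 : ℝ)..x, ((f t - p.eval t : ℝ) : ℂ) * cos (k * ((x : ℂ) - 2 * t))) +
        ∫ t in (0 : ℝ)..x, ((p.eval t : ℝ) : ℂ) * cos (k * ((x : ℂ) - 2 * t)) := by
    rw [← integral_add ((hfx.sub hpx).ofReal.mul_continuousOn hcos)
      (hpx.ofReal.mul_continuousOn hcos)]
    exact integral_congr fun t _ => by push_cast; ring
  have hdiff : ‖∫ t in (0 : ℝ)..x, ((f t - p.eval t : ℝ) : ℂ) *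
      cos (k * ((x : ℂ) - 2 * t))‖ ≤ ε / 2 * Real.exp (|k.im| * x) := by
    refine (norm_integral_mul_cos_mul_sub_two_mul_le hx.1 (hfx.sub hpx).ofReal).trans ?_
    gcongr
    simp only [Complex.norm_real, Real.norm_eq_abs]
    exact (integral_mono_interval le_rfl hx.1 hx.2 (Filter.Eventually.of_forall fun _ =>
      abs_nonneg _) (hf.sub (p.continuous.intervalIntegrable _ _)).abs).trans hp
  have hpoly : ‖∫ t in (0 : ℝ)..x, ((p.eval t : ℝ) : ℂ) * cos (k * ((x : ℂ) - 2 * t))‖ ≤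
      ε / 2 * Real.exp (|k.im| * x) := by
    refine (hC k (norm_pos_iff.1 hk) x hx).trans ?_
    rw [mul_div_right_comm]
    gcongr
  rw [hsplit]
  calc _ ≤ _ := norm_add_le _ _
    _ ≤ ε / 2 * Real.exp (|k.im| * x) + ε / 2 * Real.exp (|k.im| * x) := add_le_add hdiff hpoly
    _ = ε * Real.exp (|k.im| * x) := by ring

/-- Riemann–Lebesgue type estimate: for `q` absolutely continuous on `[0, ℓ]`
with derivative `q' ∈ L¹((0,ℓ))`, the oscillatory integral `∫₀ˣ sin(k(x−2t)) q(t) dt` equals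
`(1/(2k))(q(x) − q(0)) cos(kx)` up to an error `o(e^{|Im k| x}/|k|)` uniformly in `x ∈ [0, ℓ]`. -/
theorem gelfand_levitan_oscillatory_sin_integral
    (ℓ : ℝ) (hℓ : 0 < ℓ) (q q' : ℝ → ℝ)
    (hq' : IntervalIntegrable q' volume 0 ℓ)
    (hq : ∀ x ∈ Set.Icc (0 : ℝ) ℓ, q x = q 0 + ∫ t in (0 : ℝ)..x, q' t) :
    ∀ ε > 0, ∃ K > 0, ∀ k : ℂ, K ≤ ‖k‖ → ∀ x ∈ Set.Icc (0 : ℝ) ℓ,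
      ‖(∫ t in (0 : ℝ)..x, Complex.sin (k * ((x : ℂ) - 2 * t)) * (q t : ℂ))
          - (1 / (2 * k)) * ((q x : ℂ) - (q 0 : ℂ)) * Complex.cos (k * x)‖
        ≤ ε * Real.exp (|k.im| * x) / ‖k‖ := by
  intro ε hε
  obtain ⟨K, hK, hbound⟩ := exists_norm_integral_mul_cos_mul_sub_two_mul_le hℓ.le hq' hε
  refine ⟨K, hK, fun k hkK x hx => ?_⟩
  have hk : 0 < ‖k‖ := hK.trans_le hkK
  rw [integral_sin_mul_sub_two_mul_mul_sub_eq_integral_mul_cos (norm_pos_iff.1 hk) hx.1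
    (hq'.mono_set (uIcc_subset_uIcc_left (Icc_subset_uIcc hx)))
    (fun t ht => hq t (Icc_subset_Icc_right hx.2 ht)),
    norm_mul, norm_neg, norm_div, norm_one, norm_mul, Complex.norm_ofNat]
  calc 1 / (2 * ‖k‖) * ‖∫ t in (0 : ℝ)..x, (q' t : ℂ) * cos (k * ((x : ℂ) - 2 * t))‖
      ≤ 1 / (2 * ‖k‖) * (ε * Real.exp (|k.im| * x)) := by gcongr; exact hbound k hkK x hx
    _ ≤ ε * Real.exp (|k.im| * x) / ‖k‖ := by
        rw [one_div_mul_eq_div]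
        gcongr
        linarith
end

section
/- Let ℓ > 0 and 0 < ε < π/2. Then there exist constants K_ε > 0 and N₀ > 0 such that for every N > N₀ with N ∉ ⋃_{n∈ℤ} (nπ/ℓ − ε/ℓ, nπ/ℓ + ε/ℓ), every point k on the boundary of the square [−N,N] × [−N,N] in ℂ (i.e. the square contour with vertices N − iN, N + iN, −N + iN, −N − iN) satisfies e^{|Im k| ℓ} ≤ K_ε |sin(kℓ)|. -/
open Real

/-! Write `z = kℓ`. Since `‖sin z‖² = sin² (Re z) + sinh² (Im z)` and
`exp |Im z| = 2 sinh |Im z| + exp (-|Im z|) ≤ 2 ‖sin z‖ + 1`, it suffices to bound `‖sin z‖`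
below by a positive constant on the contour. On the vertical sides `|Re z| = Nℓ` stays at
distance at least `ε` from `πℤ`, so `|sin (Re z)| ≥ sin ε`; on the horizontal sides
`|Im z| = Nℓ ≥ 1`, so `sinh |Im z| ≥ 1`. -/

namespace Complex

theorem norm_sin_sq (z : ℂ) : ‖sin z‖ ^ 2 = Real.sin z.re ^ 2 + Real.sinh z.im ^ 2 := by
  rw [sin_eq, ← ofReal_sin, ← ofReal_cos, ← ofReal_cosh, ← ofReal_sinh, ← ofReal_mul,
    ← ofReal_mul, ← normSq_eq_norm_sq, normSq_add_mul_I]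
  linear_combination Real.sin z.re ^ 2 * Real.cosh_sq_sub_sinh_sq z.im
    + Real.sinh z.im ^ 2 * Real.sin_sq_add_cos_sq z.re

theorem abs_sin_re_le_norm_sin (z : ℂ) : |Real.sin z.re| ≤ ‖sin z‖ :=
  abs_le_of_sq_le_sq (by rw [norm_sin_sq]; exact le_add_of_nonneg_right (sq_nonneg _))
    (norm_nonneg _)

theorem sinh_abs_im_le_norm_sin (z : ℂ) : Real.sinh |z.im| ≤ ‖sin z‖ := by
  rw [← Real.abs_sinh]
  exact abs_le_of_sq_le_sq (by rw [norm_sin_sq]; exact le_add_of_nonneg_left (sq_nonneg _))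
    (norm_nonneg _)

theorem exp_abs_im_le_two_mul_norm_sin_add_one (z : ℂ) :
    Real.exp |z.im| ≤ 2 * ‖sin z‖ + 1 := by
  have hsinh := sinh_abs_im_le_norm_sin z
  have hexp_neg : Real.exp (-|z.im|) ≤ 1 := Real.exp_le_one_iff.2 (neg_nonpos.2 (abs_nonneg _))
  rw [Real.sinh_eq] at hsinh
  linarith

theorem exp_abs_im_le_mul_norm_sin {z : ℂ} {c : ℝ} (hc : 0 < c) (h : c ≤ ‖sin z‖) :
    Real.exp |z.im| ≤ (2 + c⁻¹) * ‖sin z‖ := by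
  have : 1 ≤ c⁻¹ * ‖sin z‖ := by rwa [le_inv_mul_iff₀ hc, mul_one]
  linarith [exp_abs_im_le_two_mul_norm_sin_add_one z]

end Complex

theorem Real.sin_le_abs_sin_of_forall_le_abs_sub_int_mul_pi {ε x : ℝ} (hε : 0 ≤ ε)
    (hε' : ε ≤ π / 2) (h : ∀ n : ℤ, ε ≤ |x - n * π|) : sin ε ≤ |sin x| := by
  set n := round (x / π)
  have hdist : |x - n * π| ≤ π / 2 := by
    have := abs_sub_round (x / π)
    rw [show x - n * π = (x / π - n) * π by field_simp, abs_mul, abs_of_pos pi_pos]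
    nlinarith [pi_pos]
  calc sin ε ≤ sin |x - n * π| := sin_le_sin_of_le_of_le_pi_div_two (by linarith) hdist (h n)
    _ = |sin (x - n * π)| := (abs_sin_eq_sin_abs_of_abs_le_pi (by linarith [pi_pos])).symm
    _ = |sin x| := by rw [sin_sub_int_mul_pi, abs_mul, abs_neg_one_zpow, one_mul]

theorem le_abs_mul_sub_of_notMem_Ioo {ℓ a ε x : ℝ} (hℓ : 0 < ℓ)
    (hx : x ∉ Set.Ioo (a / ℓ - ε / ℓ) (a / ℓ + ε / ℓ)) : ε ≤ |x * ℓ - a| := by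
  rw [← sub_div, ← add_div, Set.mem_Ioo, div_lt_iff₀ hℓ, lt_div_iff₀ hℓ, not_and_or, not_lt,
    not_lt] at hx
  rcases hx with hx | hx
  · exact le_abs.2 (Or.inr (by linarith))
  · exact le_abs.2 (Or.inl (by linarith))

/-- For `ℓ > 0` and `0 < ε < π/2` there are constants `K_ε > 0` and `N₀ > 0`
such that for every `N > N₀` avoiding the "forbidden intervals"
`(nπ/ℓ − ε/ℓ, nπ/ℓ + ε/ℓ)`, `n ∈ ℤ`, every point `k` on the boundary of the square
`[−N, N] × [−N, N]` in `ℂ` satisfies `e^{|Im k| ℓ} ≤ K_ε |sin(kℓ)|`. -/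
theorem exp_le_abs_sin_on_square_contour
    (ℓ : ℝ) (hℓ : 0 < ℓ) (ε : ℝ) (hε : 0 < ε) (hε' : ε < π / 2) :
    ∃ K > 0, ∃ N₀ > 0, ∀ N : ℝ, N₀ < N →
      (∀ n : ℤ, N ∉ Set.Ioo (n * π / ℓ - ε / ℓ) (n * π / ℓ + ε / ℓ)) →
      ∀ k : ℂ, max |k.re| |k.im| = N →
        Real.exp (|k.im| * ℓ) ≤ K * ‖Complex.sin (k * ℓ)‖ := by
  have hsin_ε : 0 < sin ε := sin_pos_of_pos_of_lt_pi hε (by linarith [pi_pos])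
  refine ⟨2 + (sin ε)⁻¹, by positivity, ℓ⁻¹, inv_pos.2 hℓ, fun N hN hN_avoid k hk => ?_⟩
  have him : |(k * ℓ).im| = |k.im| * ℓ := by simp [abs_of_pos hℓ]
  rw [← him]
  refine Complex.exp_abs_im_le_mul_norm_sin hsin_ε ?_
  rcases max_choice |k.re| |k.im| with hside | hside <;> rw [hside] at hk
  · have hsin_N : sin ε ≤ |sin (N * ℓ)| :=
      sin_le_abs_sin_of_forall_le_abs_sub_int_mul_pi hε.le hε'.le
        fun n => le_abs_mul_sub_of_notMem_Ioo hℓ (hN_avoid n)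
    calc sin ε ≤ |sin (k * ℓ).re| := by
          rw [← hk] at hsin_N
          rw [show (k * ℓ).re = k.re * ℓ by simp]
          rcases abs_choice k.re with h | h <;> simpa [h] using hsin_N
      _ ≤ _ := Complex.abs_sin_re_le_norm_sin _
  · calc sin ε ≤ 1 := sin_le_one ε
      _ ≤ |(k * ℓ).im| := by rw [him, hk]; exact ((inv_lt_iff_one_lt_mul₀ hℓ).1 hN).le
      _ ≤ sinh |(k * ℓ).im| := self_le_sinh_iff.2 (abs_nonneg _)
      _ ≤ _ := Complex.sinh_abs_im_le_norm_sin _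
end

section
/- Let d ∈ ℕ, d ≥ 1, let ℓ₁, …, ℓ_d > 0 and let ε satisfy 0 < ε < π / (4 (max_j ℓ_j) ∑_{i=1}^d (1/ℓ_i)). Then for every j ∈ {1,…,d} and every n ∈ ℕ₀ there exists a point x with nπ/ℓ_j < x < (n+1)π/ℓ_j such that x ∉ ⋃_{i=1}^d ⋃_{m∈ℕ₀} (mπ/ℓ_i − ε/ℓ_i, mπ/ℓ_i + ε/ℓ_i). -/
open Real MeasureTheory

lemma sum_overlap_le (p r a b : ℝ) (hr : 0 < r) (hrp : 2*r ≤ p) (hab : a < b) (M : ℕ) :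
    ∑ m ∈ Finset.range M, max (min ((m:ℝ)*p + r) b - max ((m:ℝ)*p - r) a) 0
      ≤ ((b - a)/p + 1) * (2*r) := by
  have hp : 0 < p := lt_of_lt_of_le (by linarith) hrp
  set h : ℕ → ℝ := fun m => max (min ((m:ℝ)*p + r) b - max ((m:ℝ)*p - r) a) 0 with hh
  have hnn : ∀ m, 0 ≤ h m := fun m => le_max_right _ _
  have hle2r : ∀ m, h m ≤ 2*r := by
    intro m
    apply max_le _ (by linarith)
    have h1 : min ((m:ℝ)*p + r) b ≤ (m:ℝ)*p + r := min_le_left _ _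
    have h2 : (m:ℝ)*p - r ≤ max ((m:ℝ)*p - r) a := le_max_left _ _
    linarith
  have hval : ∀ m, 0 < h m →
      h m = min ((m:ℝ)*p + r) b - max ((m:ℝ)*p - r) a := by
    intro m hm
    rcases le_or_gt (min ((m:ℝ)*p + r) b - max ((m:ℝ)*p - r) a) 0 with hx | hx
    · exfalso
      have : h m = 0 := max_eq_right hx
      rw [this] at hm; exact lt_irrefl 0 hm
    · exact max_eq_left hx.le
  have ht : 0 < (b - a)/p := div_pos (by linarith) hp
  set S := (Finset.range M).filter (fun m => 0 < h m) with hS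
  have hsum : ∑ m ∈ Finset.range M, h m = ∑ m ∈ S, h m := by
    rw [hS]
    exact (Finset.sum_filter_of_ne (fun x _ hx => lt_of_le_of_ne (hnn x) (Ne.symm hx))).symm
  rw [hsum]
  rcases S.eq_empty_or_nonempty with hSe | hSne
  · rw [hSe]; simp; positivity
  set m₀ := S.min' hSne with hm₀
  set m₁ := S.max' hSne with hm₁
  have hm0 : m₀ ∈ S := S.min'_mem hSne
  have hm1 : m₁ ∈ S := S.max'_mem hSne
  have hmm : m₀ ≤ m₁ := S.min'_le _ hm1
  have hsub : S ⊆ Finset.Icc m₀ m₁ :=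
    fun x hx => Finset.mem_Icc.mpr ⟨S.min'_le x hx, S.le_max' x hx⟩
  have hcardN : S.card ≤ m₁ + 1 - m₀ := by
    calc S.card ≤ (Finset.Icc m₀ m₁).card := Finset.card_le_card hsub
    _ = m₁ + 1 - m₀ := Nat.card_Icc m₀ m₁
  have hcard : (S.card : ℝ) ≤ (m₁:ℝ) - m₀ + 1 := by
    have h2 : (S.card : ℝ) ≤ ((m₁ + 1 - m₀ : ℕ) : ℝ) := Nat.cast_le.mpr hcardN
    rw [Nat.cast_sub (by omega)] at h2
    push_cast at h2 ⊢
    linarith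
  by_cases hΔ : ((m₁:ℝ) - m₀) ≤ (b-a)/p
  · -- few intervals: crude bound
    have hcrude : ∑ m ∈ S, h m ≤ S.card • (2*r) :=
      Finset.sum_le_card_nsmul S h (2*r) (fun x _ => hle2r x)
    rw [nsmul_eq_mul] at hcrude
    nlinarith [hcrude, hcard, hΔ, hr]
  · push_neg at hΔ
    have hne : m₀ ≠ m₁ := by
      intro hcontra
      rw [hcontra, sub_self] at hΔ
      linarith
    have hpos0 : 0 < h m₀ := (Finset.mem_filter.mp hm0).2
    have hpos1 : 0 < h m₁ := (Finset.mem_filter.mp hm1).2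
    have hend0 : h m₀ ≤ (m₀:ℝ)*p + r - a := by
      have hx := hval m₀ hpos0
      have h1 : min ((m₀:ℝ)*p + r) b ≤ (m₀:ℝ)*p + r := min_le_left _ _
      have h2 : a ≤ max ((m₀:ℝ)*p - r) a := le_max_right _ _
      linarith
    have hend1 : h m₁ ≤ b - ((m₁:ℝ)*p - r) := by
      have hx := hval m₁ hpos1
      have h1 : min ((m₁:ℝ)*p + r) b ≤ b := min_le_right _ _
      have h2 : (m₁:ℝ)*p - r ≤ max ((m₁:ℝ)*p - r) a := le_max_left _ _
      linarith
    -- split off the two endpoints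
    have hm1' : m₁ ∈ S.erase m₀ := Finset.mem_erase.mpr ⟨Ne.symm hne, hm1⟩
    have hsplit0 : ∑ m ∈ S, h m = h m₀ + ∑ m ∈ S.erase m₀, h m :=
      (Finset.add_sum_erase S h hm0).symm
    have hsplit1 : ∑ m ∈ S.erase m₀, h m = h m₁ + ∑ m ∈ (S.erase m₀).erase m₁, h m :=
      (Finset.add_sum_erase _ h hm1').symm
    have hcard2 : 2 ≤ S.card := Finset.one_lt_card.mpr ⟨m₀, hm0, m₁, hm1, hne⟩
    have hcardee : ((S.erase m₀).erase m₁).card = S.card - 2 := by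
      rw [Finset.card_erase_of_mem hm1', Finset.card_erase_of_mem hm0]
      omega
    have hmid : ∑ m ∈ (S.erase m₀).erase m₁, h m ≤ ((S.card:ℝ) - 2) * (2*r) := by
      have := Finset.sum_le_card_nsmul ((S.erase m₀).erase m₁) h (2*r) (fun x _ => hle2r x)
      rw [nsmul_eq_mul, hcardee] at this
      have hc2 : ((S.card - 2 : ℕ) : ℝ) = (S.card : ℝ) - 2 := by
        rw [Nat.cast_sub hcard2]; norm_num
      rw [hc2] at this
      exact this
    have hba : (b-a)/p * p = b - a := div_mul_cancel₀ _ (ne_of_gt hp)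
    have key : 0 ≤ (((m₁:ℝ) - m₀) - (b-a)/p) * (p - 2*r) :=
      mul_nonneg (by linarith) (by linarith)
    nlinarith [hsplit0, hsplit1, hmid, hend0, hend1, hcard, key, hba, hr]


/-- If `0 < ε < π / (4 (maxⱼ ℓⱼ) Σᵢ 1/ℓᵢ)`, then between any two consecutive
zeros `nπ/ℓⱼ` and `(n+1)π/ℓⱼ` of `sin(kℓⱼ)` there is a point avoiding all the forbidden
intervals `(mπ/ℓᵢ − ε/ℓᵢ, mπ/ℓᵢ + ε/ℓᵢ)`, `i = 1, …, d`, `m ∈ ℕ₀`. -/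
theorem allowed_point_between_consecutive_zeros
    (d : ℕ) (hd : 1 ≤ d) (ℓ : Fin d → ℝ) (hℓ : ∀ i, 0 < ℓ i)
    (ε : ℝ) (hε : 0 < ε)
    (hε' : ε < π / (4 * (⨆ j, ℓ j) * ∑ i, (ℓ i)⁻¹)) :
    ∀ j : Fin d, ∀ n : ℕ, ∃ x : ℝ,
      n * π / ℓ j < x ∧ x < (n + 1) * π / ℓ j ∧
      ∀ i : Fin d, ∀ m : ℕ,
        x ∉ Set.Ioo (m * π / ℓ i - ε / ℓ i) (m * π / ℓ i + ε / ℓ i) := by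

  intro j n
  have hne : Nonempty (Fin d) := ⟨⟨0, hd⟩⟩
  set L := ⨆ j, ℓ j with hLdef
  set Sm := ∑ i, (ℓ i)⁻¹ with hSmdef
  have hLb : ∀ i, ℓ i ≤ L := fun i => le_ciSup (Set.Finite.bddAbove (Set.finite_range ℓ)) i
  have hL0 : 0 < L := lt_of_lt_of_le (hℓ ⟨0, hd⟩) (hLb _)
  have hSm0 : 0 < Sm := Finset.sum_pos (fun i _ => inv_pos.mpr (hℓ i)) ⟨⟨0, hd⟩, Finset.mem_univ _⟩
  have h4 : (0:ℝ) < 4 * L * Sm := by positivity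
  have hεπ : ε * (4 * L * Sm) < π := (lt_div_iff₀ h4).mp hε'
  have hπ : (0:ℝ) < π := Real.pi_pos
  have hdSm : (d:ℝ) ≤ L * Sm := by
    have h1 : ∀ i : Fin d, (1:ℝ) ≤ L * (ℓ i)⁻¹ := by
      intro i
      rw [← div_eq_mul_inv, le_div_iff₀ (hℓ i), one_mul]
      exact hLb i
    calc (d:ℝ) = ∑ _i : Fin d, (1:ℝ) := by simp
      _ ≤ ∑ i, L * (ℓ i)⁻¹ := Finset.sum_le_sum (fun i _ => h1 i)
      _ = L * Sm := by rw [hSmdef, Finset.mul_sum]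
  have hLSm1 : (1:ℝ) ≤ L * Sm := by
    have hd1 : (1:ℝ) ≤ (d:ℝ) := by exact_mod_cast hd
    linarith
  have hε4 : 4 * ε < π := by nlinarith
  have hlj : 0 < ℓ j := hℓ j
  set a := (n:ℝ) * π / ℓ j with hadef
  set b := ((n:ℝ) + 1) * π / ℓ j with hbdef
  have hab : a < b := by
    rw [hadef, hbdef]
    apply (div_lt_div_iff_of_pos_right hlj).mpr
    nlinarith
  have hba : b - a = π / ℓ j := by
    rw [hadef, hbdef]
    field_simp
    ring
  set M : Fin d → ℕ := fun i => ⌈(b * ℓ i + ε) / π⌉₊ with hMdef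
  set U : Set ℝ := ⋃ i : Fin d, ⋃ m ∈ Finset.range (M i),
      (Set.Ioo ((m:ℝ) * π / ℓ i - ε / ℓ i) ((m:ℝ) * π / ℓ i + ε / ℓ i) ∩ Set.Ioo a b)
      with hUdef
  -- volume estimate
  have hvolU : volume U < volume (Set.Ioo a b) := by
    have step2 : ∀ i : Fin d, volume (⋃ m ∈ Finset.range (M i),
        (Set.Ioo ((m:ℝ) * π / ℓ i - ε / ℓ i) ((m:ℝ) * π / ℓ i + ε / ℓ i) ∩ Set.Ioo a b))
        ≤ ENNReal.ofReal ((ℓ i / ℓ j + 1) * (2 * (ε / ℓ i))) := by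
      intro i
      have hli : 0 < ℓ i := hℓ i
      have e1 : volume (⋃ m ∈ Finset.range (M i),
          (Set.Ioo ((m:ℝ) * π / ℓ i - ε / ℓ i) ((m:ℝ) * π / ℓ i + ε / ℓ i) ∩ Set.Ioo a b))
          ≤ ∑ m ∈ Finset.range (M i), volume
          (Set.Ioo ((m:ℝ) * π / ℓ i - ε / ℓ i) ((m:ℝ) * π / ℓ i + ε / ℓ i) ∩ Set.Ioo a b) :=
        measure_biUnion_finset_le _ _
      have e2 : ∀ m : ℕ, volume
          (Set.Ioo ((m:ℝ) * π / ℓ i - ε / ℓ i) ((m:ℝ) * π / ℓ i + ε / ℓ i) ∩ Set.Ioo a b)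
          ≤ ENNReal.ofReal
            (max (min ((m:ℝ) * (π / ℓ i) + ε / ℓ i) b - max ((m:ℝ) * (π / ℓ i) - ε / ℓ i) a) 0) := by
        intro m
        rw [Set.Ioo_inter_Ioo, Real.volume_Ioo]
        apply ENNReal.ofReal_le_ofReal
        rw [mul_div_assoc]
        exact le_max_left _ _
      have e3 : ∑ m ∈ Finset.range (M i), volume
          (Set.Ioo ((m:ℝ) * π / ℓ i - ε / ℓ i) ((m:ℝ) * π / ℓ i + ε / ℓ i) ∩ Set.Ioo a b)
          ≤ ∑ m ∈ Finset.range (M i), ENNReal.ofReal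
            (max (min ((m:ℝ) * (π / ℓ i) + ε / ℓ i) b - max ((m:ℝ) * (π / ℓ i) - ε / ℓ i) a) 0) :=
        Finset.sum_le_sum (fun m _ => e2 m)
      have e4 : ∑ m ∈ Finset.range (M i), ENNReal.ofReal
            (max (min ((m:ℝ) * (π / ℓ i) + ε / ℓ i) b - max ((m:ℝ) * (π / ℓ i) - ε / ℓ i) a) 0)
          = ENNReal.ofReal (∑ m ∈ Finset.range (M i),
            max (min ((m:ℝ) * (π / ℓ i) + ε / ℓ i) b - max ((m:ℝ) * (π / ℓ i) - ε / ℓ i) a) 0) :=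
        (ENNReal.ofReal_sum_of_nonneg (fun m _ => le_max_right _ _)).symm
      have e5 : ∑ m ∈ Finset.range (M i),
            max (min ((m:ℝ) * (π / ℓ i) + ε / ℓ i) b - max ((m:ℝ) * (π / ℓ i) - ε / ℓ i) a) 0
          ≤ ((b - a)/(π / ℓ i) + 1) * (2 * (ε / ℓ i)) :=
        sum_overlap_le (π / ℓ i) (ε / ℓ i) a b (by positivity)
          (by rw [show (2:ℝ) * (ε / ℓ i) = (2*ε)/ℓ i from by ring]
              exact (div_le_div_iff_of_pos_right hli).mpr (by linarith)) hab (M i)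
      have e6 : (b - a)/(π / ℓ i) = ℓ i / ℓ j := by
        rw [hba]
        field_simp
      rw [e6] at e5
      calc volume (⋃ m ∈ Finset.range (M i),
          (Set.Ioo ((m:ℝ) * π / ℓ i - ε / ℓ i) ((m:ℝ) * π / ℓ i + ε / ℓ i) ∩ Set.Ioo a b))
          ≤ _ := e1
        _ ≤ _ := e3
        _ = _ := e4
        _ ≤ _ := ENNReal.ofReal_le_ofReal e5
    have step1 : volume U ≤ ∑ i : Fin d, ENNReal.ofReal ((ℓ i / ℓ j + 1) * (2 * (ε / ℓ i))) :=
      le_trans (measure_iUnion_fintype_le _ _) (Finset.sum_le_sum (fun i _ => step2 i))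
    have step3 : ∑ i : Fin d, ENNReal.ofReal ((ℓ i / ℓ j + 1) * (2 * (ε / ℓ i)))
        = ENNReal.ofReal (∑ i : Fin d, (ℓ i / ℓ j + 1) * (2 * (ε / ℓ i))) :=
      (ENNReal.ofReal_sum_of_nonneg (fun i _ => by have h1 := hℓ i; have h2 := hℓ j; positivity)).symm
    have hreal : ∑ i : Fin d, (ℓ i / ℓ j + 1) * (2 * (ε / ℓ i)) < b - a := by
      have hsummand : ∀ i : Fin d, (ℓ i / ℓ j + 1) * (2 * (ε / ℓ i))
          = 2 * ε / ℓ j + 2 * ε * (ℓ i)⁻¹ := by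
        intro i
        have hli := hℓ i
        field_simp
      have hsum_eq : ∑ i : Fin d, (ℓ i / ℓ j + 1) * (2 * (ε / ℓ i))
          = (d:ℝ) * (2 * ε / ℓ j) + 2 * ε * (∑ i : Fin d, (ℓ i)⁻¹) := by
        rw [Finset.sum_congr rfl (fun i _ => hsummand i), Finset.sum_add_distrib,
          Finset.sum_const, Finset.mul_sum]
        simp only [Finset.card_univ, Fintype.card_fin, nsmul_eq_mul]
      rw [hsum_eq, ← hSmdef, hba]
      have key : (d:ℝ) * (2 * ε) + 2 * ε * Sm * ℓ j < π := by
        have t1 : (d:ℝ) * (2 * ε) ≤ (L * Sm) * (2 * ε) := by nlinarith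
        have hnn : (0:ℝ) ≤ 2 * ε * Sm := by nlinarith
        have t2 : 2 * ε * Sm * ℓ j ≤ 2 * ε * Sm * L :=
          mul_le_mul_of_nonneg_left (hLb j) hnn
        nlinarith
      have h7 : (d:ℝ) * (2 * ε / ℓ j) + 2 * ε * Sm
          = ((d:ℝ) * (2 * ε) + 2 * ε * Sm * ℓ j) / ℓ j := by
        field_simp
        try ring
      rw [h7]
      exact (div_lt_div_iff_of_pos_right hlj).mpr key
    calc volume U ≤ _ := step1
      _ = _ := step3
      _ < ENNReal.ofReal (b - a) :=
        (ENNReal.ofReal_lt_ofReal_iff (by linarith)).mpr hreal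
      _ = volume (Set.Ioo a b) := (Real.volume_Ioo).symm
  have hex : (Set.Ioo a b \ U).Nonempty := by
    by_contra hcon
    rw [Set.not_nonempty_iff_eq_empty, Set.diff_eq_empty] at hcon
    exact absurd (measure_mono hcon) (not_le.mpr hvolU)
  obtain ⟨x, hx1, hx2⟩ := hex
  refine ⟨x, hx1.1, hx1.2, ?_⟩
  intro i m hmem
  apply hx2
  by_cases hm : m < M i
  · rw [hUdef]
    exact Set.mem_iUnion.mpr ⟨i, Set.mem_biUnion (Finset.mem_range.mpr hm) ⟨hmem, hx1⟩⟩
  · exfalso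
    have hli := hℓ i
    have hMm : (M i : ℝ) ≤ m := Nat.cast_le.mpr (not_lt.mp hm)
    have h1 : (b * ℓ i + ε) / π ≤ (m:ℝ) := le_trans (Nat.le_ceil _) hMm
    rw [div_le_iff₀ hπ] at h1
    -- b ≤ m π / ℓ i − ε / ℓ i
    have h2 : b ≤ (m:ℝ) * π / ℓ i - ε / ℓ i := by
      rw [div_sub_div_same, le_div_iff₀ hli]
      linarith
    have h3 := hmem.1
    linarith [hx1.2]
end

section
/- Let ℓ > 0, n ∈ ℤ with n ≠ 0, and 0 < r < π/ℓ. Then (1/(2πi)) ∮_{|k − nπ/ℓ| = r} (cot²(kℓ)/k) dk = −1/(n²π²), where the circle is traversed once counterclockwise. -/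
/-!
Near `c = nπ/ℓ`, periodicity gives `cot²(kℓ) = g(k - c) / (k - c)²` with
`g(w) = w² cot²(wℓ)`, which is holomorphic on `|w| < π/ℓ` once its removable singularity is
filled in, even, and has `g(0) = 1/ℓ²`. By Cauchy's formula for the derivative, the normalized
integral is `d/dk (g(k - c)/k)` at `k = c`, i.e. `g'(0)/c - g(0)/c² = -1/(ℓc)² = -1/(nπ)²`.
-/

open Real Metric Set Filter

lemma Complex.cot_periodic : Function.Periodic Complex.cot π := fun x => by
  rw [← inv_inv (Complex.cot _), ← inv_inv (Complex.cot x), Complex.cot_inv_eq_tan,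
    Complex.cot_inv_eq_tan, Complex.tan_periodic]

lemma Complex.sin_ne_zero_of_norm_lt_pi {z : ℂ} (h0 : z ≠ 0) (hz : ‖z‖ < π) :
    Complex.sin z ≠ 0 := by
  refine Complex.sin_ne_zero_iff.2 fun k hk => ?_
  rcases eq_or_ne k 0 with rfl | hk0
  · simp [hk] at h0
  · have : π ≤ ‖z‖ := by
      rw [hk, norm_mul, Complex.norm_intCast, Complex.norm_real, Real.norm_of_nonneg pi_pos.le]
      exact le_mul_of_one_le_left pi_pos.le (by exact_mod_cast Int.one_le_abs hk0)
    linarith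

lemma deriv_zero_of_even {𝕜 F : Type*} [RCLike 𝕜] [NormedAddCommGroup F] [NormedSpace 𝕜 F]
    {f : 𝕜 → F} (hf : ∀ x, f (-x) = f x) : deriv f 0 = 0 := by
  have h := deriv_comp_neg (f := f) (x := 0)
  simp only [hf, neg_zero] at h
  have h2 : (2 : 𝕜) • deriv f 0 = 0 := by
    rw [two_smul]
    nth_rewrite 1 [h]
    exact neg_add_cancel _
  exact (smul_eq_zero.1 h2).resolve_left two_ne_zero

lemma hasDerivAt_comp_sub_div {g : ℂ → ℂ} {c : ℂ} (hg : HasDerivAt g 0 0) (hc : c ≠ 0) :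
    HasDerivAt (fun k => g (k - c) / k) (-(g 0 / c ^ 2)) c := by
  have hshift : HasDerivAt (fun k => g (k - c)) 0 c := by
    simpa using HasDerivAt.comp_sub_const (f := g) c c (by rwa [sub_self])
  refine (hshift.fun_div (hasDerivAt_id' c) hc).congr_deriv ?_
  rw [sub_self]
  ring

/-- `w² cot²(wℓ)`, written through the slope of `w ↦ sin(wℓ)` at `0` so that it is
holomorphic at `0`. -/
noncomputable def cotSqRegular (ℓ w : ℂ) : ℂ :=
  (Complex.cos (w * ℓ) / dslope (fun w => Complex.sin (w * ℓ)) 0 w) ^ 2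

section cotSqRegular

variable {ℓ w : ℂ}

lemma cotSqRegular_of_ne_zero (hw : w ≠ 0) :
    cotSqRegular ℓ w = w ^ 2 * Complex.cot (w * ℓ) ^ 2 := by
  rw [cotSqRegular, dslope_of_ne _ hw, slope_def_field, Complex.cot_eq_cos_div_sin]
  simp only [zero_mul, Complex.sin_zero, sub_zero]
  field_simp

lemma hasDerivAt_sin_mul_zero (ℓ : ℂ) : HasDerivAt (fun w => Complex.sin (w * ℓ)) ℓ 0 := by
  simpa [Function.comp_def] using
    (Complex.hasDerivAt_sin (0 * ℓ)).comp 0 (hasDerivAt_mul_const ℓ)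

lemma cotSqRegular_zero : cotSqRegular ℓ 0 = (ℓ ^ 2)⁻¹ := by
  rw [cotSqRegular, dslope_same, (hasDerivAt_sin_mul_zero ℓ).deriv]
  simp

lemma cotSqRegular_neg (w : ℂ) : cotSqRegular ℓ (-w) = cotSqRegular ℓ w := by
  rcases eq_or_ne w 0 with rfl | hw
  · rw [neg_zero]
  · rw [cotSqRegular_of_ne_zero hw, cotSqRegular_of_ne_zero (neg_ne_zero.2 hw), neg_mul,
      Complex.cot_eq_cos_div_sin, Complex.cot_eq_cos_div_sin, Complex.cos_neg, Complex.sin_neg]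
    ring

lemma dslope_sin_mul_ne_zero (hℓ : ℓ ≠ 0) (hw : ‖w * ℓ‖ < π) :
    dslope (fun w => Complex.sin (w * ℓ)) 0 w ≠ 0 := by
  rcases eq_or_ne w 0 with rfl | hw0
  · rwa [dslope_same, (hasDerivAt_sin_mul_zero ℓ).deriv]
  · rw [dslope_of_ne _ hw0, slope_def_field, zero_mul, Complex.sin_zero, sub_zero, sub_zero]
    exact div_ne_zero (Complex.sin_ne_zero_of_norm_lt_pi (mul_ne_zero hw0 hℓ) hw) hw0

lemma differentiableOn_cotSqRegular (hℓ : ℓ ≠ 0) :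
    DifferentiableOn ℂ (cotSqRegular ℓ) (ball 0 (π / ‖ℓ‖)) := by
  have hsin : Differentiable ℂ (dslope (fun w => Complex.sin (w * ℓ)) 0) := by
    rw [← differentiableOn_univ, Complex.differentiableOn_dslope univ_mem, differentiableOn_univ]
    fun_prop
  intro w hw
  have hwℓ : ‖w * ℓ‖ < π := by
    rw [mem_ball_zero_iff, lt_div_iff₀ (norm_pos_iff.2 hℓ)] at hw
    rwa [norm_mul]
  refine DifferentiableAt.differentiableWithinAt ?_
  unfold cotSqRegular
  exact ((by fun_prop : DifferentiableAt ℂ (fun w => Complex.cos (w * ℓ)) w).div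
    (hsin w) (dslope_sin_mul_ne_zero hℓ hwℓ)).pow 2

lemma hasDerivAt_cotSqRegular_zero (hℓ : ℓ ≠ 0) : HasDerivAt (cotSqRegular ℓ) 0 0 := by
  have hd := (differentiableOn_cotSqRegular hℓ).differentiableAt
    (isOpen_ball.mem_nhds (mem_ball_self (div_pos pi_pos (norm_pos_iff.2 hℓ))))
  simpa [deriv_zero_of_even cotSqRegular_neg] using hd.hasDerivAt

end cotSqRegular

lemma cot_mul_sq_eq_cotSqRegular_sub_div {ℓ c z : ℂ} {n : ℤ} (hc : c * ℓ = n * π)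
    (hz : z ≠ c) :
    Complex.cot (z * ℓ) ^ 2 = cotSqRegular ℓ (z - c) / (z - c) ^ 2 := by
  have hperiod : Complex.cot (z * ℓ) = Complex.cot ((z - c) * ℓ) := by
    rw [← (Complex.cot_periodic.int_mul n) ((z - c) * ℓ), sub_mul, hc, sub_add_cancel]
  rw [cotSqRegular_of_ne_zero (sub_ne_zero.2 hz), hperiod,
    mul_div_cancel_left₀ _ (pow_ne_zero 2 (sub_ne_zero.2 hz))]

/-- `(1/(2πi)) ∮_{|k − nπ/ℓ| = r} cot²(kℓ)/k dk = −1/(n²π²)` for `n ≠ 0`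
and `0 < r < π/ℓ`. -/
theorem circleIntegral_cot_sq_div_k
    (ℓ : ℝ) (hℓ : 0 < ℓ) (n : ℤ) (hn : n ≠ 0) (r : ℝ) (hr : 0 < r) (hr' : r < π / ℓ) :
    (1 / (2 * (π : ℂ) * Complex.I)) *
        (∮ k in C((((n : ℝ) * π / ℓ : ℝ) : ℂ), r), Complex.cot (k * ℓ) ^ 2 / k)
      = -(1 / ((n : ℂ) ^ 2 * (π : ℂ) ^ 2)) := by
  set c : ℂ := (((n : ℝ) * π / ℓ : ℝ) : ℂ)
  have hℓ0 : (ℓ : ℂ) ≠ 0 := Complex.ofReal_ne_zero.2 hℓ.ne'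
  have hcℓ : c * ℓ = n * π := by
    simp only [c]
    push_cast
    field_simp
  have hc_norm : π / ℓ ≤ ‖c‖ := by
    rw [Complex.norm_real, Real.norm_eq_abs, abs_div, abs_mul, abs_of_pos pi_pos, abs_of_pos hℓ]
    gcongr
    exact le_mul_of_one_le_left pi_pos.le (by exact_mod_cast Int.one_le_abs hn)
  have hc0 : c ≠ 0 := norm_pos_iff.1 ((div_pos pi_pos hℓ).trans_le hc_norm)
  have hF : DifferentiableOn ℂ (fun k => cotSqRegular ℓ (k - c) / k) (ball c (π / ℓ)) := by
    refine ((differentiableOn_cotSqRegular hℓ0).comp (by fun_prop) fun k hk => ?_).div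
      differentiableOn_id fun k hk hk0 => ?_
    · rwa [mem_ball_zero_iff, Complex.norm_real, Real.norm_of_nonneg hℓ.le, ← dist_eq_norm]
    · rw [mem_ball, hk0, dist_comm, dist_zero_right] at hk
      exact hk.not_ge hc_norm
  have hintegrand : EqOn (fun k => Complex.cot (k * ℓ) ^ 2 / k)
      (fun k => ((k - c) ^ 2)⁻¹ • (cotSqRegular ℓ (k - c) / k)) (sphere c r) := by
    intro k hk
    simp only [smul_eq_mul, cot_mul_sq_eq_cotSqRegular_sub_div hcℓ (ne_of_mem_sphere hk hr.ne')]
    ring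
  rw [circleIntegral.integral_congr hr.le hintegrand, one_div, ← smul_eq_mul,
    Complex.two_pi_I_inv_smul_circleIntegral_sub_sq_inv_smul_of_differentiable isOpen_ball
      (closedBall_subset_ball hr') hF (mem_ball_self hr),
    (hasDerivAt_comp_sub_div (hasDerivAt_cotSqRegular_zero hℓ0) hc0).deriv, cotSqRegular_zero]
  rw [div_eq_mul_inv, ← mul_inv, ← mul_pow, mul_comm, hcℓ, mul_pow, one_div]
end

section
/- Let ℓ > 0, n ∈ ℤ and 0 < r < π/ℓ. Then (1/(2πi)) ∮_{|k − nπ/ℓ| = r} (cot(kℓ)/(k sin(kℓ))) dk equals −(−1)ⁿ/(n²π²) if n ≠ 0, and equals −1/6 if n = 0, where the circle is traversed once counterclockwise. -/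
/-!
Put `s(k) = sin (k ℓ)`. The integrand `cot (k ℓ) / (k s(k))` differs from the derivative of
`-1 / (ℓ k s(k))` by `1 / (ℓ k² s(k))`, so the integral equals `-∮ 1 / (ℓ k² s(k))`.
For `n ≠ 0` this is a simple pole at `a = nπ/ℓ`, with residue
`cos (a ℓ) / (a ℓ)² = (-1)ⁿ / (n²π²)`.
For `n = 0` the pole is triple: writing `sin w = w + w³ E(w)` with `E` entire and `E 0 = -1/6`
splits off `1 / (ℓ² k³)`, whose integral vanishes, and leaves a simple pole with residue `1/6`.
-/

open Real Complex Metric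

theorem differentiable_of_eq_pow_mul {𝕜 : Type*} [NontriviallyNormedField 𝕜] {f F : 𝕜 → 𝕜}
    {n : ℕ} (hf : Differentiable 𝕜 f) (hF : DifferentiableAt 𝕜 F 0)
    (h : ∀ z, f z = z ^ n * F z) : Differentiable 𝕜 F := by
  intro z
  rcases eq_or_ne z 0 with rfl | hz
  · exact hF
  have hquot : (fun w => f w / w ^ n) =ᶠ[nhds z] F := by
    filter_upwards [isOpen_ne.mem_nhds hz] with w hw
    rw [h w, mul_div_cancel_left₀ _ (pow_ne_zero n hw)]
  exact ((hf z).div (differentiableAt_pow n) (pow_ne_zero n hz)).congr_of_eventuallyEq hquot.symm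

theorem Complex.hasDerivAt_sin_mul_const (ℓ z : ℂ) :
    HasDerivAt (fun w => sin (w * ℓ)) (cos (z * ℓ) * ℓ) z := by
  simpa using ((hasDerivAt_id z).mul_const ℓ).csin

theorem Complex.cos_int_mul_pi (n : ℤ) : cos (n * π) = (-1) ^ n := by
  rw [← ofReal_intCast, ← ofReal_mul, ← ofReal_cos, Real.cos_int_mul_pi, ofReal_zpow, ofReal_neg,
    ofReal_one]

theorem Complex.exists_differentiable_sin_eq_add_pow_three_mul :
    ∃ E : ℂ → ℂ, Differentiable ℂ E ∧ E 0 = -1 / 6 ∧ ∀ z, sin z = z + z ^ 3 * E z := by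
  obtain ⟨F, hF, hsin⟩ := (analyticAt_sin (x := 0)).exists_eq_sum_add_pow_mul 4
  have hsin' : ∀ z, sin z = z + z ^ 3 * (-1 / 6 + z * F z) := fun z => by
    rw [hsin z]
    simp only [Finset.sum_range_succ, Finset.range_one, Finset.sum_singleton, Nat.factorial,
      iteratedDeriv_zero, iteratedDeriv_one, iteratedDeriv_add_one_sin, iteratedDeriv_add_one_cos,
      deriv_sin, deriv_cos', Pi.neg_apply, sin_zero, cos_zero, smul_eq_mul]
    push_cast
    ring
  refine ⟨fun z => -1 / 6 + z * F z, ?_, by simp, hsin'⟩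
  refine differentiable_of_eq_pow_mul (f := fun z => sin z - z) (n := 3) (by fun_prop) ?_
    fun z => ?_
  · exact (differentiableAt_id.mul hF.differentiableAt).const_add _
  · rw [hsin' z]; ring

theorem circleIntegral_div_eq_of_deriv_ne_zero {u f : ℂ → ℂ} {c : ℂ} {R : ℝ} (hR : 0 < R)
    (hu : DifferentiableOn ℂ u (closedBall c R)) (hf : DifferentiableOn ℂ f (closedBall c R))
    (hfc : f c = 0) (hf' : deriv f c ≠ 0) (hf0 : ∀ z ∈ closedBall c R, z ≠ c → f z ≠ 0) :
    ∮ z in C(c, R), u z / f z = 2 * π * I * (u c / deriv f c) := by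
  have hfS : ∀ z, f z = (z - c) * dslope f c z := fun z =>
    (sub_smul_dslope_of_zero hfc z).symm
  have hS : DifferentiableOn ℂ (dslope f c) (closedBall c R) :=
    (differentiableOn_dslope (closedBall_mem_nhds c hR)).2 hf
  have hS0 : ∀ z ∈ closedBall c R, dslope f c z ≠ 0 := by
    intro z hz
    rcases eq_or_ne z c with rfl | hzc
    · rwa [dslope_same]
    · exact right_ne_zero_of_mul (hfS z ▸ hf0 z hz hzc)
  have hpole : Set.EqOn (fun z => u z / f z) (fun z => (z - c)⁻¹ • (u z / dslope f c z))
      (sphere c R) := fun z _ => by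
    simp only [hfS z, div_mul_eq_div_div_swap, div_eq_inv_mul (u z / _), smul_eq_mul]
  rw [circleIntegral.integral_congr hR.le hpole]
  simpa [dslope_same] using (hu.div hS hS0).circleIntegral_sub_inv_smul (mem_ball_self hR)

theorem hasDerivAt_neg_inv_mul_mul_sin {ℓ z : ℂ} (hℓ : ℓ ≠ 0) (hz : z ≠ 0)
    (hsin : sin (z * ℓ) ≠ 0) :
    HasDerivAt (fun w => -(ℓ * w * sin (w * ℓ))⁻¹)
      (cot (z * ℓ) / (z * sin (z * ℓ)) + (ℓ * z ^ 2)⁻¹ / sin (z * ℓ)) z := by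
  refine ((((hasDerivAt_id z).const_mul ℓ).mul (hasDerivAt_sin_mul_const ℓ z)).inv
    ?_).neg.congr_deriv ?_
  · simp [hℓ, hz, hsin]
  · simp only [Complex.cot_eq_cos_div_sin, Pi.mul_apply, id]
    field_simp
    ring

theorem circleIntegral_cot_mul_div_mul_sin_eq_neg {ℓ c : ℂ} {R : ℝ} (hℓ : ℓ ≠ 0) (hR : 0 ≤ R)
    (hsin : ∀ z ∈ sphere c R, sin (z * ℓ) ≠ 0) :
    ∮ z in C(c, R), cot (z * ℓ) / (z * sin (z * ℓ)) =
      -∮ z in C(c, R), (ℓ * z ^ 2)⁻¹ / sin (z * ℓ) := by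
  have hne : ∀ z ∈ sphere c R, z ≠ 0 := fun z hz h0 => hsin z hz (by simp [h0])
  have hcot : ContinuousOn (fun z => cot (z * ℓ) / (z * sin (z * ℓ))) (sphere c R) := by
    simp only [Complex.cot_eq_cos_div_sin]
    exact ContinuousOn.div (by fun_prop) (by fun_prop) fun z hz =>
      mul_ne_zero (hne z hz) (hsin z hz)
  have hpole : ContinuousOn (fun z => (ℓ * z ^ 2)⁻¹ / sin (z * ℓ)) (sphere c R) :=
    ContinuousOn.div (ContinuousOn.inv₀ (by fun_prop) fun z hz => by simp [hℓ, hne z hz])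
      (by fun_prop) hsin
  have hexact := circleIntegral.integral_eq_zero_of_hasDerivWithinAt hR fun z hz =>
    (hasDerivAt_neg_inv_mul_mul_sin hℓ (hne z hz) (hsin z hz)).hasDerivWithinAt
  rw [circleIntegral.integral_add (hcot.circleIntegrable hR) (hpole.circleIntegrable hR)] at hexact
  exact eq_neg_of_add_eq_zero_left hexact

theorem circleIntegral_inv_mul_sq_div_sin_of_ne_zero {ℓ a : ℂ} {R : ℝ} (hℓ : ℓ ≠ 0)
    (ha : a ≠ 0) (hR : 0 < R) (hsa : sin (a * ℓ) = 0)
    (hsin : ∀ z ∈ closedBall a R, z ≠ a → sin (z * ℓ) ≠ 0) :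
    ∮ z in C(a, R), (ℓ * z ^ 2)⁻¹ / sin (z * ℓ) = 2 * π * I * cos (a * ℓ) / (a * ℓ) ^ 2 := by
  have hne : ∀ z ∈ closedBall a R, z ≠ 0 := fun z hz h0 =>
    hsin z hz (h0 ▸ ha.symm) (by simp [h0])
  have hcos_sq : cos (a * ℓ) ^ 2 = 1 := by simpa [hsa] using sin_sq_add_cos_sq (a * ℓ)
  have hcos : cos (a * ℓ) ≠ 0 := fun h => by simp [h] at hcos_sq
  rw [circleIntegral_div_eq_of_deriv_ne_zero (f := fun z => sin (z * ℓ)) hR _ _ hsa _ hsin,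
    (hasDerivAt_sin_mul_const ℓ a).deriv]
  · generalize cos (a * ℓ) = c at hcos hcos_sq ⊢
    field_simp
    linear_combination -hcos_sq
  · exact DifferentiableOn.inv (by fun_prop) fun z hz => by simp [hℓ, hne z hz]
  · fun_prop
  · rw [(hasDerivAt_sin_mul_const ℓ a).deriv]
    exact mul_ne_zero hcos hℓ

theorem circleIntegral_inv_mul_sq_div_sin_zero {ℓ : ℂ} {R : ℝ} (hℓ : ℓ ≠ 0) (hR : 0 < R)
    (hsin : ∀ z ∈ closedBall 0 R, z ≠ 0 → sin (z * ℓ) ≠ 0) :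
    ∮ z in C(0, R), (ℓ * z ^ 2)⁻¹ / sin (z * ℓ) = 2 * π * I / 6 := by
  obtain ⟨E, hE, hE0, hsinE⟩ := Complex.exists_differentiable_sin_eq_add_pow_three_mul
  have hEc := hE.continuous
  have hsplit : Set.EqOn (fun z => (ℓ * z ^ 2)⁻¹ / sin (z * ℓ))
      (fun z => (ℓ ^ 2)⁻¹ * (z - 0) ^ (-3 : ℤ) + -ℓ * E (z * ℓ) / sin (z * ℓ)) (sphere 0 R) := by
    intro z hz
    have hz0 : z ≠ 0 := ne_of_mem_sphere hz hR.ne'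
    have hs := hsin z (sphere_subset_closedBall hz) hz0
    have hsin_sub : sin (z * ℓ) - z * ℓ = (z * ℓ) ^ 3 * E (z * ℓ) := by rw [hsinE]; ring
    simp only [sub_zero, zpow_neg, zpow_ofNat]
    generalize sin (z * ℓ) = s at hs hsin_sub ⊢
    generalize E (z * ℓ) = e at hsin_sub ⊢
    field_simp
    linear_combination -hsin_sub
  have hcube_int : CircleIntegrable (fun z => (ℓ ^ 2)⁻¹ * (z - 0) ^ (-3 : ℤ)) 0 R :=
    (circleIntegrable_sub_zpow_iff.2 (Or.inr (Or.inr (by simp [abs_of_pos hR, hR.ne])))).const_mul _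
  have hsimple_int : CircleIntegrable (fun z => -ℓ * E (z * ℓ) / sin (z * ℓ)) 0 R :=
    ContinuousOn.circleIntegrable hR.le <| ContinuousOn.div (by fun_prop) (by fun_prop)
      fun z hz => hsin z (sphere_subset_closedBall hz) (ne_of_mem_sphere hz hR.ne')
  rw [circleIntegral.integral_congr hR.le hsplit, circleIntegral.integral_add hcube_int hsimple_int,
    circleIntegral.integral_const_mul, circleIntegral.integral_sub_zpow_of_ne (by decide),
    circleIntegral_div_eq_of_deriv_ne_zero (f := fun z => sin (z * ℓ)) hR _ _ (by simp) _ hsin,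
    (hasDerivAt_sin_mul_const ℓ 0).deriv, zero_mul, hE0, Complex.cos_zero]
  · field_simp
    ring
  · fun_prop
  · fun_prop
  · simpa [(hasDerivAt_sin_mul_const ℓ 0).deriv] using hℓ

theorem ofReal_int_mul_pi_div_mul {ℓ : ℝ} (hℓ : ℓ ≠ 0) (n : ℤ) :
    (((n : ℝ) * π / ℓ : ℝ) : ℂ) * ℓ = n * π := by
  have : (ℓ : ℂ) ≠ 0 := by exact_mod_cast hℓ
  push_cast
  field_simp

theorem sin_mul_ne_zero_of_mem_closedBall {ℓ r : ℝ} (hℓ : 0 < ℓ) (hr : r < π / ℓ) (n : ℤ)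
    {z : ℂ} (hz : z ∈ closedBall (((n : ℝ) * π / ℓ : ℝ) : ℂ) r)
    (hzn : z ≠ (((n : ℝ) * π / ℓ : ℝ) : ℂ)) : sin (z * ℓ) ≠ 0 := by
  set a : ℂ := (((n : ℝ) * π / ℓ : ℝ) : ℂ)
  intro hsin
  obtain ⟨m, hm⟩ := sin_eq_zero_iff.1 hsin
  have hdiff : (z - a) * ℓ = ((m - n : ℤ) : ℂ) * π := by
    push_cast
    linear_combination hm - ofReal_int_mul_pi_div_mul hℓ.ne' n
  have hmn : m - n ≠ 0 := fun h0 => hzn <| by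
    simpa [h0, sub_eq_zero, hℓ.ne'] using hdiff
  have hfar : π ≤ ‖z - a‖ * ℓ := by
    have := congrArg norm hdiff
    rw [norm_mul, norm_mul, Complex.norm_real, Complex.norm_real, Complex.norm_intCast,
      Real.norm_of_nonneg hℓ.le, Real.norm_of_nonneg pi_pos.le] at this
    rw [this]
    exact le_mul_of_one_le_left pi_pos.le (by exact_mod_cast Int.one_le_abs hmn)
  have hnear : ‖z - a‖ * ℓ < π :=
    (lt_div_iff₀ hℓ).1 (lt_of_le_of_lt (by simpa [dist_eq_norm] using hz) hr)
  linarith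

/-- `(1/(2πi)) ∮_{|k − nπ/ℓ| = r} cot(kℓ)/(k sin(kℓ)) dk` equals
`−(−1)ⁿ/(n²π²)` if `n ≠ 0` and `−1/6` if `n = 0`, for `0 < r < π/ℓ`. -/
theorem circleIntegral_cot_div_k_sin
    (ℓ : ℝ) (hℓ : 0 < ℓ) (n : ℤ) (r : ℝ) (hr : 0 < r) (hr' : r < π / ℓ) :
    (1 / (2 * (π : ℂ) * Complex.I)) *
        (∮ k in C((((n : ℝ) * π / ℓ : ℝ) : ℂ), r),
          Complex.cot (k * ℓ) / (k * Complex.sin (k * ℓ)))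
      = if n = 0 then -(1 / 6) else -((-1) ^ n / ((n : ℂ) ^ 2 * (π : ℂ) ^ 2)) := by
  set a : ℂ := (((n : ℝ) * π / ℓ : ℝ) : ℂ)
  have hℓ0 : (ℓ : ℂ) ≠ 0 := by exact_mod_cast hℓ.ne'
  have haℓ : a * ℓ = n * π := ofReal_int_mul_pi_div_mul hℓ.ne' n
  have hsin : ∀ z ∈ closedBall a r, z ≠ a → sin (z * ℓ) ≠ 0 := fun z hz hza =>
    sin_mul_ne_zero_of_mem_closedBall hℓ hr' n hz hza
  rw [circleIntegral_cot_mul_div_mul_sin_eq_neg hℓ0 hr.le fun z hz =>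
    hsin z (sphere_subset_closedBall hz) (ne_of_mem_sphere hz hr.ne')]
  split_ifs with hn
  · subst hn
    rw [show a = 0 by simp [a]] at hsin ⊢
    rw [circleIntegral_inv_mul_sq_div_sin_zero hℓ0 hr hsin]
    field_simp
  · have ha : a ≠ 0 := by simp [a, hn, pi_ne_zero, hℓ.ne']
    have hsa : sin (a * ℓ) = 0 := by rw [haℓ]; exact sin_int_mul_pi n
    rw [circleIntegral_inv_mul_sq_div_sin_of_ne_zero hℓ0 ha hr hsa hsin, haℓ,
      Complex.cos_int_mul_pi]
    field_simp
end

section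
/- Let ℓ > 0, n ∈ ℤ and 0 < r < π/ℓ. Then (1/(2πi)) ∮_{|k − nπ/ℓ| = r} (1/(k sin²(kℓ))) dk equals −1/(n²π²) if n ≠ 0, and equals 1/3 if n = 0, where the circle is traversed once counterclockwise. -/
/-! Away from `0`, `k ↦ -cot (kℓ) / (ℓk)` is a primitive of
`1 / (k sin² (kℓ)) + cot (kℓ) / (ℓk²)`, so the double pole of the integrand may be traded for the
pole of `-cot (kℓ) / (ℓk²)`. For `n ≠ 0` this pole is simple, with residue `-1 / (n²π²)`. For
`n = 0` it is of order three; its principal part `1 / (ℓ²k³)` has a primitive too, and what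
remains has a simple pole with residue `1/3`, the limit of `-(w cot w - 1) / w²`, which the
Taylor bounds for `sin` and `cos` give. A simple pole is handled by the Cauchy integral formula
applied to `(k - c) g(k)` with its removable singularity filled in. -/

open Real Complex Filter Topology Metric Set Function

theorem circleIntegral_eq_of_tendsto_sub_smul {E : Type*} [NormedAddCommGroup E]
    [NormedSpace ℂ E] [CompleteSpace E] {c : ℂ} {r R : ℝ} {g : ℂ → E} {L : E}
    (hr : 0 < r) (hrR : r < R) (hg : DifferentiableOn ℂ g (ball c R \ {c}))
    (hL : Tendsto (fun z => (z - c) • g z) (𝓝[≠] c) (𝓝 L)) :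
    (∮ z in C(c, r), g z) = (2 * π * I : ℂ) • L := by
  set e : ℂ → E := update (fun z => (z - c) • g z) c L
  have he : DifferentiableOn ℂ e (ball c R) := by
    refine (differentiableOn_compl_singleton_and_continuousAt_iff
      (ball_mem_nhds c (hr.trans hrR))).mp ⟨?_, continuousAt_update_same.mpr hL⟩
    exact ((differentiableOn_id.sub_const c).smul hg).congr fun z hz => update_of_ne hz.2 _ _
  have hcauchy := (he.mono (closedBall_subset_ball hrR)).circleIntegral_sub_inv_smul
    (mem_ball_self hr)
  rw [show e c = L from update_self _ _ _] at hcauchy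
  rw [← hcauchy]
  refine circleIntegral.integral_congr hr.le fun z hz => ?_
  have hzc : z ≠ c := ne_of_mem_sphere hz hr.ne'
  simp [e, update_of_ne hzc, smul_smul, inv_mul_cancel₀ (sub_ne_zero.2 hzc)]

theorem tendsto_sub_div_of_hasDerivAt {𝕜 : Type*} [NontriviallyNormedField 𝕜] {f : 𝕜 → 𝕜}
    {f' c : 𝕜} (hf : HasDerivAt f f' c) (hc : f c = 0) (hf' : f' ≠ 0) :
    Tendsto (fun z => (z - c) / f z) (𝓝[≠] c) (𝓝 f'⁻¹) :=
  ((hasDerivAt_iff_tendsto_slope.mp hf).inv₀ hf').congr fun z => by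
    rw [slope_def_field, hc, sub_zero, inv_div]

namespace Complex

theorem tendsto_mul_cos_sub_sin_div_pow_three :
    Tendsto (fun z : ℂ => (z * cos z - sin z) / z ^ 3) (𝓝[≠] 0) (𝓝 (-(1 / 3))) := by
  have hbound : ∀ᶠ z in 𝓝[≠] (0 : ℂ), ‖(z * cos z - sin z) / z ^ 3 - -(1 / 3)‖ ≤ ‖z‖ := by
    filter_upwards [self_mem_nhdsWithin, nhdsWithin_le_nhds (closedBall_mem_nhds (0 : ℂ) one_pos)]
      with z (hz0 : z ≠ 0) hz1
    rw [mem_closedBall_zero_iff] at hz1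
    have hnum : (z * cos z - sin z) / z ^ 3 - -(1 / 3) =
        (z * (cos z - (1 - z ^ 2 / 2)) - (sin z - (z - z ^ 3 / 6))) / z ^ 3 := by
      field_simp
      ring
    have hcos := cos_bound hz1
    have hsin := sin_bound hz1
    have hz : 0 < ‖z‖ := norm_pos_iff.2 hz0
    rw [hnum, norm_div, norm_pow, div_le_iff₀ (by positivity)]
    calc _ ≤ ‖z‖ * ‖cos z - (1 - z ^ 2 / 2)‖ + ‖sin z - (z - z ^ 3 / 6)‖ := by
          rw [← norm_mul]; exact norm_sub_le _ _
      _ ≤ ‖z‖ * (‖z‖ ^ 4 * (5 / 96)) + ‖z‖ ^ 5 / 100 := by gcongr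
      _ ≤ ‖z‖ * ‖z‖ ^ 3 := by nlinarith [pow_le_one₀ hz.le hz1 (n := 4), pow_pos hz 4]
  have hzero : Tendsto (fun z : ℂ => ‖z‖) (𝓝[≠] 0) (𝓝 0) :=
    (continuous_norm.tendsto' 0 0 norm_zero).mono_left nhdsWithin_le_nhds
  simpa using (squeeze_zero_norm' hbound hzero).add_const (-(1 / 3) : ℂ)

theorem tendsto_mul_cos_div_sin_sub_one_div_sq :
    Tendsto (fun w : ℂ => (w * cos w / sin w - 1) / w ^ 2) (𝓝[≠] 0) (𝓝 (-(1 / 3))) := by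
  have hsin : HasDerivAt sin 1 0 := by simpa using hasDerivAt_sin 0
  have h := tendsto_mul_cos_sub_sin_div_pow_three.mul
    (by simpa using tendsto_sub_div_of_hasDerivAt hsin sin_zero one_ne_zero)
  rw [mul_one] at h
  refine h.congr' ?_
  have hsin_ne : ∀ᶠ w in 𝓝[≠] (0 : ℂ), sin w ≠ 0 := by
    simpa using hsin.eventually_ne one_ne_zero
  filter_upwards [self_mem_nhdsWithin, hsin_ne] with w (hw : w ≠ 0) hs
  field_simp

theorem ne_zero_of_sin_mul_ne_zero {k a : ℂ} (hs : sin (k * a) ≠ 0) : k ≠ 0 ∧ a ≠ 0 :=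
  mul_ne_zero_iff.mp fun h => hs (by rw [h, sin_zero])

theorem sin_ne_zero_of_dist_lt_pi {w : ℂ} {n : ℤ} (h : dist w (n * π) < π)
    (hw : w ≠ n * π) : sin w ≠ 0 := by
  intro hs
  obtain ⟨m, rfl⟩ := sin_eq_zero_iff.1 hs
  have hmn : m - n ≠ 0 := sub_ne_zero.2 (by rintro rfl; exact hw rfl)
  have h1 : (1 : ℝ) ≤ |((m - n : ℤ) : ℝ)| := by exact_mod_cast Int.one_le_abs hmn
  rw [dist_eq, ← sub_mul, ← Int.cast_sub, norm_mul, norm_real, Real.norm_of_nonneg pi_pos.le,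
    Complex.norm_intCast] at h
  nlinarith [pi_pos]

theorem hasDerivAt_neg_cos_mul_div_mul_sin_mul (a : ℂ) {k : ℂ} (hs : sin (k * a) ≠ 0) :
    HasDerivAt (fun z => -(cos (z * a) / (a * z * sin (z * a))))
      (1 / (k * sin (k * a) ^ 2) + cos (k * a) / sin (k * a) / (a * k ^ 2)) k := by
  obtain ⟨hk, ha⟩ := ne_zero_of_sin_mul_ne_zero hs
  have hsin : HasDerivAt (fun z => sin (z * a)) (cos (k * a) * a) k :=
    (hasDerivAt_mul_const a).csin
  have hcos : HasDerivAt (fun z => cos (z * a)) (-sin (k * a) * a) k :=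
    (hasDerivAt_mul_const a).ccos
  have hden : HasDerivAt (fun z => a * z * sin (z * a))
      (a * sin (k * a) + a * k * (cos (k * a) * a)) k := by
    simpa using ((hasDerivAt_id k).const_mul a).fun_mul hsin
  refine (hcos.div hden (by simp [*])).neg.congr_deriv ?_
  field_simp
  linear_combination (k * a) * Complex.sin_sq_add_cos_sq (k * a)

theorem differentiableOn_cos_mul_div_sin_mul_div {a : ℂ} {s : Set ℂ}
    (hs : ∀ k ∈ s, sin (k * a) ≠ 0) :
    DifferentiableOn ℂ (fun k => cos (k * a) / sin (k * a) / (a * k ^ 2)) s := fun k hk => by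
  obtain ⟨hk0, ha⟩ := ne_zero_of_sin_mul_ne_zero (hs k hk)
  have := hs k hk
  exact DifferentiableAt.differentiableWithinAt (by fun_prop (disch := simp [*]))

theorem circleIntegral_one_div_mul_sin_sq {a c : ℂ} {r : ℝ} (hr : 0 ≤ r)
    (hs : ∀ k ∈ sphere c r, sin (k * a) ≠ 0) :
    (∮ k in C(c, r), 1 / (k * sin (k * a) ^ 2)) =
      -∮ k in C(c, r), cos (k * a) / sin (k * a) / (a * k ^ 2) := by
  have hexact := circleIntegral.integral_eq_zero_of_hasDerivWithinAt hr fun k hk =>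
    (hasDerivAt_neg_cos_mul_div_mul_sin_mul a (hs k hk)).hasDerivWithinAt
  have hf : CircleIntegrable (fun k => 1 / (k * sin (k * a) ^ 2)) c r := by
    refine ContinuousOn.circleIntegrable hr fun k hk => ?_
    obtain ⟨hk0, ha⟩ := ne_zero_of_sin_mul_ne_zero (hs k hk)
    have := hs k hk
    exact ContinuousAt.continuousWithinAt (by fun_prop (disch := simp [*]))
  have hg := ((differentiableOn_cos_mul_div_sin_mul_div hs).continuousOn).circleIntegrable hr
  rw [circleIntegral.integral_add hf hg] at hexact
  exact eq_neg_of_add_eq_zero_left hexact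

theorem tendsto_sub_mul_cos_mul_div_sin_mul_div {a c : ℂ} (ha : a ≠ 0) (hc : c ≠ 0)
    (hs : sin (c * a) = 0) :
    Tendsto (fun k => (k - c) * (cos (k * a) / sin (k * a) / (a * k ^ 2))) (𝓝[≠] c)
      (𝓝 (1 / (a ^ 2 * c ^ 2))) := by
  have hcos : cos (c * a) ≠ 0 := fun h => by simpa [hs, h] using sin_sq_add_cos_sq (c * a)
  have hpole := tendsto_sub_div_of_hasDerivAt (hasDerivAt_mul_const a).csin hs
    (mul_ne_zero hcos ha)
  have hcont : ContinuousAt (fun k => cos (k * a) / (a * k ^ 2)) c := by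
    fun_prop (disch := simp [*])
  convert hpole.mul (hcont.tendsto.mono_left nhdsWithin_le_nhds) using 2 with k
  · ring
  · rw [mul_comm c a] at hcos
    field_simp

theorem circleIntegral_cos_mul_div_sin_mul_div_center_zero {a : ℂ} (ha : a ≠ 0)
    {r R : ℝ} (hr : 0 < r) (hrR : r < R) (hs : ∀ k ∈ ball (0 : ℂ) R \ {0}, sin (k * a) ≠ 0) :
    (∮ k in C(0, r), cos (k * a) / sin (k * a) / (a * k ^ 2)) = 2 * π * I * (-(1 / 3)) := by
  set g := fun k : ℂ => cos (k * a) / sin (k * a) / (a * k ^ 2)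
  set h := fun k : ℂ => (a ^ 2)⁻¹ * (k - 0) ^ (-3 : ℤ)
  have hh : (∮ k in C(0, r), h k) = 0 := by
    simp only [h, circleIntegral.integral_const_mul,
      circleIntegral.integral_sub_zpow_of_ne (by decide : (-3 : ℤ) ≠ -1), mul_zero]
  have hdiff_h : DifferentiableOn ℂ h (ball 0 R \ {0}) := fun k hk => by
    have hk0 : k ≠ 0 := hk.2
    exact DifferentiableAt.differentiableWithinAt (by fun_prop (disch := simp [*]))
  have hdiff : DifferentiableOn ℂ (g - h) (ball 0 R \ {0}) :=
    (differentiableOn_cos_mul_div_sin_mul_div hs).sub hdiff_h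
  have hres : Tendsto (fun k => (k - 0) • (g - h) k) (𝓝[≠] 0) (𝓝 (-(1 / 3))) := by
    have hmap : Tendsto (· * a) (𝓝[≠] (0 : ℂ)) (𝓝[≠] 0) :=
      tendsto_nhdsWithin_of_tendsto_nhds_of_eventually_within _
        (((continuous_mul_const a).tendsto' 0 0 (zero_mul a)).mono_left nhdsWithin_le_nhds)
        (eventually_nhdsWithin_of_forall fun k hk => mul_ne_zero hk ha)
    refine (tendsto_mul_cos_div_sin_sub_one_div_sq.comp hmap).congr' ?_
    filter_upwards [self_mem_nhdsWithin] with k (hk : k ≠ 0)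
    simp only [g, h, Function.comp, Pi.sub_apply, sub_zero, smul_eq_mul, zpow_neg]
    field_simp
  have hsphere : sphere (0 : ℂ) r ⊆ ball 0 R \ {0} := fun k hk =>
    ⟨sphere_subset_ball hrR hk, ne_of_mem_sphere hk hr.ne'⟩
  have hint_h : CircleIntegrable h 0 r :=
    (hdiff_h.continuousOn.mono hsphere).circleIntegrable hr.le
  have hint : CircleIntegrable (g - h) 0 r :=
    (hdiff.continuousOn.mono hsphere).circleIntegrable hr.le
  calc (∮ k in C(0, r), g k) = ∮ k in C(0, r), ((g - h) k + h k) := by simp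
    _ = 2 * π * I * (-(1 / 3)) := by
      rw [circleIntegral.integral_add hint hint_h, hh, add_zero,
        circleIntegral_eq_of_tendsto_sub_smul hr hrR hdiff hres, smul_eq_mul]

theorem sin_mul_ne_zero_of_mem_ball {ℓ : ℝ} (hℓ : 0 < ℓ) {n : ℤ} {k : ℂ}
    (hk : k ∈ ball (((n : ℝ) * π / ℓ : ℝ) : ℂ) (π / ℓ) \ {(((n : ℝ) * π / ℓ : ℝ) : ℂ)}) :
    sin (k * ℓ) ≠ 0 := by
  obtain ⟨hk, hkc⟩ := hk
  have hℓ' : (ℓ : ℂ) ≠ 0 := ofReal_ne_zero.2 hℓ.ne'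
  have hc : (((n : ℝ) * π / ℓ : ℝ) : ℂ) * ℓ = n * π := by push_cast; field_simp
  refine sin_ne_zero_of_dist_lt_pi (n := n) ?_ ?_
  · rw [mem_ball, lt_div_iff₀ hℓ] at hk
    rwa [← hc, dist_eq, ← sub_mul, norm_mul, norm_real, Real.norm_of_nonneg hℓ.le, ← dist_eq]
  · rw [← hc]
    exact fun h => hkc (mul_right_cancel₀ hℓ' h)

end Complex

/-- `(1/(2πi)) ∮_{|k − nπ/ℓ| = r} dk/(k sin²(kℓ))` equals `−1/(n²π²)` if
`n ≠ 0` and `1/3` if `n = 0`, for `0 < r < π/ℓ`. -/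
theorem circleIntegral_one_div_k_sin_sq
    (ℓ : ℝ) (hℓ : 0 < ℓ) (n : ℤ) (r : ℝ) (hr : 0 < r) (hr' : r < π / ℓ) :
    (1 / (2 * (π : ℂ) * Complex.I)) *
        (∮ k in C((((n : ℝ) * π / ℓ : ℝ) : ℂ), r), 1 / (k * Complex.sin (k * ℓ) ^ 2))
      = if n = 0 then 1 / 3 else -(1 / ((n : ℂ) ^ 2 * (π : ℂ) ^ 2)) := by
  set c : ℂ := (((n : ℝ) * π / ℓ : ℝ) : ℂ) with hc
  have hℓ' : (ℓ : ℂ) ≠ 0 := ofReal_ne_zero.2 hℓ.ne'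
  have hπ : (π : ℂ) ≠ 0 := ofReal_ne_zero.2 pi_ne_zero
  have hcℓ : c * ℓ = n * π := by rw [hc]; push_cast; field_simp
  have hsin : ∀ k ∈ ball c (π / ℓ) \ {c}, sin (k * ℓ) ≠ 0 := fun k hk =>
    sin_mul_ne_zero_of_mem_ball hℓ hk
  rw [circleIntegral_one_div_mul_sin_sq hr.le fun k hk =>
    hsin k ⟨sphere_subset_ball hr' hk, ne_of_mem_sphere hk hr.ne'⟩]
  split_ifs with hn
  · subst hn
    have hc0 : c = 0 := by simp [hc]
    rw [hc0] at hsin ⊢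
    rw [circleIntegral_cos_mul_div_sin_mul_div_center_zero hℓ' hr hr' hsin]
    field_simp
  · have hc0 : c ≠ 0 := fun h => by simp [h, hn, hπ] at hcℓ
    have hsc : sin (c * ℓ) = 0 := by rw [hcℓ]; exact sin_int_mul_pi n
    rw [circleIntegral_eq_of_tendsto_sub_smul hr hr'
      (differentiableOn_cos_mul_div_sin_mul_div hsin)
      (tendsto_sub_mul_cos_mul_div_sin_mul_div hℓ' hc0 hsc), smul_eq_mul]
    have hcℓ2 : (ℓ : ℂ) ^ 2 * c ^ 2 = n ^ 2 * π ^ 2 := by rw [← mul_pow, mul_comm, hcℓ, mul_pow]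
    rw [hcℓ2]
    field_simp
end
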